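/- Let (M, F) be a filtered module with an exhaustive increasing ℤ-indexed filtration F (F_p = 0 for p ≪ 0, ∪_p F_p = M), equipped with a second exhaustive increasing filtration V indexed by a discrete subset of ℝ, with V carrying induced F-filtrations. Suppose ∂ : M → M is an endomorphism with ∂(F_p V_α) ⊆ F_{p+1} V_{α+1} for all p, α, inducing surjections ∂ : F_p gr^V_α → F_{p+1} gr^V_{α+1} for all α ≥ −1, and suppose ∂ : gr^V_α M → gr^V_{α+1} M is bijective for all α > −1. Then for all β > α ≥ −1, the induced map ∂ : (V_β/V_α, F_*) → (V_{β+1}/V_{α+1}, F_{*+1}) is a filtered isomorphism, i.e., ∂ induces isomorphisms F_p(V_β/V_α) ≅ F_{p+1}(V_{β+1}/V_{α+1}) for all p. -/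

import Mathlib

/-! Both halves go by induction on `β`, starting from `β = α`. Injectivity only needs that
`∂ : gr^V_γ → gr^V_{γ+1}` is injective for `γ > α`: if `x ∈ V_{γ+1}` and `∂x ∈ V_{α+1} ⊆ V_{γ+1}`,
then `x ∈ V_γ`. For surjectivity, lift `y ∈ F_{p+1}V_{γ+2}` through the filtered surjection
`F_p gr^V_{γ+1} → F_{p+1} gr^V_{γ+2}` to `x₁`, and apply the induction hypothesis to
`y - ∂x₁ ∈ F_{p+1}V_{γ+1}`; this is the five lemma for `0 → V_γ/V_α → V_{γ+1}/V_α → gr^V_{γ+1} → 0`. -/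

section

variable {R M : Type*} [CommRing R] [AddCommGroup M] [Module R M]
  {V : ℤ → Submodule R M} {D : M →ₗ[R] M} {α : ℤ}

theorem mem_of_map_mem_of_gr_injective (hV : Monotone V)
    (hinj : ∀ γ > α, ∀ x ∈ V γ, D x ∈ V γ → x ∈ V (γ - 1)) (γ : ℤ) :
    ∀ x ∈ V γ, D x ∈ V (α + 1) → x ∈ V α := by
  rcases le_total γ α with hγ | hγ
  · exact fun x hx _ => hV hγ hx
  induction γ, hγ using Int.leInduction with
  | base => exact fun x hx _ => hx
  | succ γ hγ ih =>
    intro x hx hDx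
    have hxγ : x ∈ V γ := by
      simpa using hinj (γ + 1) (by omega) x hx (hV (by omega) hDx)
    exact ih x hxγ hDx

theorem exists_sub_map_mem_of_gr_surjective {F : ℤ → Submodule R M} (hV : Monotone V)
    (hDF : ∀ p γ : ℤ, ∀ x ∈ F p ⊓ V γ, D x ∈ F (p + 1))
    (hsurj : ∀ γ > α, ∀ p : ℤ, ∀ y ∈ F (p + 1) ⊓ V (γ + 1),
      ∃ x ∈ F p ⊓ V γ, y - D x ∈ V γ)
    (γ : ℤ) (hγ : α ≤ γ) (p : ℤ) :
    ∀ y ∈ F (p + 1) ⊓ V (γ + 1), ∃ x ∈ F p ⊓ V γ, y - D x ∈ V (α + 1) := by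
  induction γ, hγ using Int.leInduction with
  | base => exact fun y hy => ⟨0, zero_mem _, by simpa using hy.2⟩
  | succ γ hγ ih =>
    intro y hy
    obtain ⟨x₁, hx₁, hyx₁⟩ := hsurj (γ + 1) (by omega) p y hy
    obtain ⟨x₂, hx₂, hyx₂⟩ := ih (y - D x₁) ⟨sub_mem hy.1 (hDF p _ x₁ hx₁), hyx₁⟩
    refine ⟨x₁ + x₂, ⟨add_mem hx₁.1 hx₂.1, add_mem hx₁.2 (hV (by omega) hx₂.2)⟩, ?_⟩
    rwa [map_add, ← sub_sub]

end

theorem filtered_iso_of_strict_specializability_general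
    {R : Type*} [CommRing R] {M : Type*} [AddCommGroup M] [Module R M]
    (F : ℤ → Submodule R M)
    (V : ℤ → Submodule R M) (hV : Monotone V)
    (D : M →ₗ[R] M)
    -- ∂(F_p V_α) ⊆ F_{p+1} V_{α+1} :
    (hDF : ∀ (p α : ℤ), ∀ x ∈ F p ⊓ V α, D x ∈ F (p + 1) ⊓ V (α + 1))
    -- ∂ : F_p gr^V_α → F_{p+1} gr^V_{α+1} is surjective for α ≥ −1 :
    (hsurj : ∀ α ≥ (-1 : ℤ), ∀ p : ℤ, ∀ y ∈ F (p + 1) ⊓ V (α + 1),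
      ∃ x ∈ F p ⊓ V α, y - D x ∈ V α)
    -- ∂ : gr^V_α M → gr^V_{α+1} M is injective for α > −1 :
    (hinj : ∀ α > (-1 : ℤ), ∀ x ∈ V α, D x ∈ V α → x ∈ V (α - 1)) :
    ∀ (α β : ℤ), -1 ≤ α → α < β → ∀ p : ℤ,
      -- injectivity of ∂ : F_p(V_β/V_α) → F_{p+1}(V_{β+1}/V_{α+1}) :
      (∀ x ∈ F p ⊓ V β, D x ∈ V (α + 1) → x ∈ V α) ∧
      -- surjectivity of ∂ : F_p(V_β/V_α) → F_{p+1}(V_{β+1}/V_{α+1}) :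
      (∀ y ∈ F (p + 1) ⊓ V (β + 1), ∃ x ∈ F p ⊓ V β, y - D x ∈ V (α + 1)) := by
  intro α β hα hβ p
  exact ⟨fun x hx => mem_of_map_mem_of_gr_injective hV (fun γ hγ => hinj γ (by omega)) β x hx.2,
    exists_sub_map_mem_of_gr_surjective hV (fun p γ x hx => (hDF p γ x hx).1)
      (fun γ hγ => hsurj γ (by omega)) β hβ.le p⟩

/-- Lemma 0.1 of the paper, abstracted: let `M` carry an exhaustive increasing
`ℤ`-indexed filtration `F` with `F_p = 0` for `p ≪ 0`, and an exhaustive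
increasing filtration `V` (indexed here by `ℤ`, enumerating the discrete index
set), with induced `F`-filtrations `F_p V_α = F_p ∩ V_α`.  Let `∂ : M → M` be
an endomorphism with `∂(F_p V_α) ⊆ F_{p+1} V_{α+1}`, inducing surjections
`∂ : F_p gr^V_α → F_{p+1} gr^V_{α+1}` for `α ≥ −1`, and such that
`∂ : gr^V_α M → gr^V_{α+1} M` is bijective for `α > −1`.  Then for all
`β > α ≥ −1` and all `p`, the induced map
`F_p(V_β/V_α) → F_{p+1}(V_{β+1}/V_{α+1})` is bijective (a filtered
isomorphism `∂ : (V_β/V_α, F_*) ≅ (V_{β+1}/V_{α+1}, F_{*+1})`), stated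
elementwise. -/
theorem filtered_iso_of_strict_specializability
    {R : Type*} [CommRing R] {M : Type*} [AddCommGroup M] [Module R M]
    (F : ℤ → Submodule R M) (hF : Monotone F)
    (hFbot : ∃ n₀ : ℤ, ∀ p ≤ n₀, F p = ⊥) (hFexh : ⨆ p, F p = ⊤)
    (V : ℤ → Submodule R M) (hV : Monotone V) (hVexh : ⨆ α, V α = ⊤)
    (D : M →ₗ[R] M)
    -- ∂(F_p V_α) ⊆ F_{p+1} V_{α+1} :
    (hDF : ∀ (p α : ℤ), ∀ x ∈ F p ⊓ V α, D x ∈ F (p + 1) ⊓ V (α + 1))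
    -- ∂ : F_p gr^V_α → F_{p+1} gr^V_{α+1} is surjective for α ≥ −1 :
    (hsurj : ∀ α ≥ (-1 : ℤ), ∀ p : ℤ, ∀ y ∈ F (p + 1) ⊓ V (α + 1),
      ∃ x ∈ F p ⊓ V α, y - D x ∈ V α)
    -- ∂ : gr^V_α M → gr^V_{α+1} M is injective for α > −1 :
    (hinj : ∀ α > (-1 : ℤ), ∀ x ∈ V α, D x ∈ V α → x ∈ V (α - 1))
    -- ∂ : gr^V_α M → gr^V_{α+1} M is surjective for α > −1 :
    (hsurj' : ∀ α > (-1 : ℤ), ∀ y ∈ V (α + 1), ∃ x ∈ V α, y - D x ∈ V α) :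
    ∀ (α β : ℤ), -1 ≤ α → α < β → ∀ p : ℤ,
      -- injectivity of ∂ : F_p(V_β/V_α) → F_{p+1}(V_{β+1}/V_{α+1}) :
      (∀ x ∈ F p ⊓ V β, D x ∈ V (α + 1) → x ∈ V α) ∧
      -- surjectivity of ∂ : F_p(V_β/V_α) → F_{p+1}(V_{β+1}/V_{α+1}) :
      (∀ y ∈ F (p + 1) ⊓ V (β + 1), ∃ x ∈ F p ⊓ V β, y - D x ∈ V (α + 1)) :=
  filtered_iso_of_strict_specializability_general F V hV D hDF hsurj hinj
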